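/- King consensus from graded agreement. Assume n > 3t, and each node v has inputs x_v ∈ 𝒱 and ℓ_v ∈ Option (Fin n). Suppose z : Fin n → 𝒱 and g : Fin n → {0,1} satisfy the graded agreement specification with respect to the inputs x, namely: (GA-Validity) if there is x ∈ 𝒱 with x_v = x for all v ∈ H then (z_v, g_v) = (x, 1) for all v ∈ H, and (GA-Agreement) if g_w = 1 for some w ∈ H then z_v = z_w for all v ∈ H. In a further round, every correct node w sends z_w to all nodes; let recv₃ denote the received messages, so recv₃ v w = some z_w for all v and all w ∈ H. Each correct node v outputs y_v ∈ Option 𝒱 determined by: if ℓ_v = none then y_v = none; otherwise, if g_v = 0 and recv₃ v ℓ' = some c (where ℓ_v = some ℓ'), then y_v = some c; otherwise y_v = some z_v. Then: (Validity) if there is x ∈ 𝒱 with x_v = x for all v ∈ H, then y_v ∈ {some x, none} for all v ∈ H; (Default) if ℓ_v = none for all v ∈ H, then y_v = none for all v ∈ H; (King Agreement) if there is ℓ ∈ H with ℓ_v = some ℓ for all v ∈ H, then y_v = y_ℓ ≠ none for all v ∈ H. -/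

import Mathlib

/-!
A correct node of grade 1 keeps its graded-agreement value, which is then shared by every
correct node (GA-Agreement); a correct node of grade 0 adopts the value broadcast by its
leader. So under a correct leader `ℓ₀` every correct node outputs `z ℓ₀`, whatever its grade.
Under unanimous input `c`, GA-Validity gives every correct node grade 1 and value `c`, so it
outputs `c` unless it has no leader.
-/

def KingOutputRule {n : ℕ} {𝒱 : Type*} (H : Finset (Fin n)) (ℓ : Fin n → Option (Fin n))
    (z : Fin n → 𝒱) (g : Fin n → Fin 2) (recv3 : Fin n → Fin n → Option 𝒱)
    (y : Fin n → Option 𝒱) : Prop :=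
  ∀ v ∈ H,
    (ℓ v = none → y v = none) ∧
    (∀ ℓ' : Fin n, ℓ v = some ℓ' →
      (g v = 0 → (∀ c : 𝒱, recv3 v ℓ' = some c → y v = some c) ∧
        (recv3 v ℓ' = none → y v = some (z v))) ∧
      (g v ≠ 0 → y v = some (z v)))

namespace KingOutputRule

variable {n : ℕ} {𝒱 : Type*} {H : Finset (Fin n)} {ℓ : Fin n → Option (Fin n)}
  {z : Fin n → 𝒱} {g : Fin n → Fin 2} {recv3 : Fin n → Fin n → Option 𝒱}
  {y : Fin n → Option 𝒱}

theorem eq_none (hrule : KingOutputRule H ℓ z g recv3 y) {v : Fin n} (hv : v ∈ H)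
    (hℓ : ℓ v = none) : y v = none :=
  (hrule v hv).1 hℓ

theorem eq_some_of_grade_eq_one (hrule : KingOutputRule H ℓ z g recv3 y) {v ℓ' : Fin n}
    (hv : v ∈ H) (hℓ : ℓ v = some ℓ') (hg : g v = 1) : y v = some (z v) :=
  ((hrule v hv).2 ℓ' hℓ).2 (by simp [hg])

theorem eq_some_of_grade_eq_zero (hrule : KingOutputRule H ℓ z g recv3 y) {v ℓ' : Fin n}
    {c : 𝒱} (hv : v ∈ H) (hℓ : ℓ v = some ℓ') (hg : g v = 0) (hc : recv3 v ℓ' = some c) :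
    y v = some c :=
  (((hrule v hv).2 ℓ' hℓ).1 hg).1 c hc

theorem eq_some_king_value (hrule : KingOutputRule H ℓ z g recv3 y)
    (hGAagr : ∀ w ∈ H, g w = 1 → ∀ v ∈ H, z v = z w)
    (h3 : ∀ v : Fin n, ∀ w ∈ H, recv3 v w = some (z w))
    {v ℓ₀ : Fin n} (hv : v ∈ H) (hℓ₀ : ℓ₀ ∈ H) (hℓ : ℓ v = some ℓ₀) :
    y v = some (z ℓ₀) := by
  rcases Fin.exists_fin_two.mp ⟨g v, rfl⟩ with hg | hg
  · exact hrule.eq_some_of_grade_eq_zero hv hℓ hg (h3 v ℓ₀ hℓ₀)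
  · rw [hrule.eq_some_of_grade_eq_one hv hℓ hg, hGAagr v hv hg ℓ₀ hℓ₀]

end KingOutputRule

theorem king_consensus_from_graded_agreement
    {n : ℕ} {𝒱 : Type*}
    (H : Finset (Fin n))
    (x : Fin n → 𝒱) (ℓ : Fin n → Option (Fin n))
    (z : Fin n → 𝒱) (g : Fin n → Fin 2)
    -- GA-Validity
    (hGAval : ∀ c : 𝒱, (∀ v ∈ H, x v = c) → ∀ v ∈ H, z v = c ∧ g v = 1)
    -- GA-Agreement
    (hGAagr : ∀ w ∈ H, g w = 1 → ∀ v ∈ H, z v = z w)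
    (recv3 : Fin n → Fin n → Option 𝒱)
    -- further round: every correct node sends its graded-agreement value to all nodes
    (h3 : ∀ v : Fin n, ∀ w ∈ H, recv3 v w = some (z w))
    (y : Fin n → Option 𝒱)
    -- output rule at correct nodes
    (hout : ∀ v ∈ H,
      (ℓ v = none → y v = none) ∧
      (∀ ℓ' : Fin n, ℓ v = some ℓ' →
        (g v = 0 → (∀ c : 𝒱, recv3 v ℓ' = some c → y v = some c) ∧
          (recv3 v ℓ' = none → y v = some (z v))) ∧
        (g v ≠ 0 → y v = some (z v)))) :
    -- Validity
    (∀ c : 𝒱, (∀ v ∈ H, x v = c) → ∀ v ∈ H, y v = some c ∨ y v = none) ∧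
    -- Default
    ((∀ v ∈ H, ℓ v = none) → ∀ v ∈ H, y v = none) ∧
    -- King Agreement
    (∀ ℓ₀ ∈ H, (∀ v ∈ H, ℓ v = some ℓ₀) → ∀ v ∈ H, y v = y ℓ₀ ∧ y ℓ₀ ≠ none) := by
  have hrule : KingOutputRule H ℓ z g recv3 y := hout
  refine ⟨fun c hc v hv => ?_, fun hnone v hv => hrule.eq_none hv (hnone v hv), ?_⟩
  · obtain ⟨hz, hg⟩ := hGAval c hc v hv
    cases hℓ : ℓ v with
    | none => exact Or.inr (hrule.eq_none hv hℓ)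
    | some ℓ' => exact Or.inl (hz ▸ hrule.eq_some_of_grade_eq_one hv hℓ hg)
  · intro ℓ₀ hℓ₀ hking v hv
    rw [hrule.eq_some_king_value hGAagr h3 hv hℓ₀ (hking v hv),
      hrule.eq_some_king_value hGAagr h3 hℓ₀ hℓ₀ (hking ℓ₀ hℓ₀)]
    exact ⟨rfl, Option.some_ne_none _⟩
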